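/- arXiv:1706.04951 — 4 statements merged into one kernel-verified Lean document; each statement's English description precedes it below -/
import Mathlib

section
/- Let ϑ be a right action of a right LCM left cancellative monoid P on a group G. Then the right semidirect product S = P ⋉_ϑ G is a right LCM monoid: for any (p,g), (q,h) ∈ S, the intersection (p,g)S ∩ (q,h)S is either empty or a principal right ideal of S. Moreover, if pP ∩ qP = rP then (p,g)S ∩ (q,h)S = (r,k)S for any k ∈ G. -/
/-- Multiplication of the right semidirect product `P ⋉_ϑ G`:
`(p,g)(q,h) = (pq, ϑ_q(g)h)`. -/
def sdMul {P G : Type*} [Monoid P] [Group G] (ϑ : P → (G →* G))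
    (a b : P × G) : P × G :=
  (a.1 * b.1, ϑ b.1 a.2 * b.2)


lemma sdIdeal_eq {P G : Type*} [Monoid P] [Group G] (ϑ : P → (G →* G)) (p : P) (g : G) :
    {x : P × G | ∃ s, x = sdMul ϑ (p, g) s} = {x : P × G | ∃ s : P, x.1 = p * s} := by
  ext x
  constructor
  · rintro ⟨s, rfl⟩
    exact ⟨s.1, rfl⟩
  · rintro ⟨s, hs⟩
    exact ⟨(s, (ϑ s g)⁻¹ * x.2), Prod.ext hs (by simp [sdMul])⟩

/-- If `ϑ` is a right action of a right LCM left cancellative monoid `P` on a group `G`,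
then `S = P ⋉_ϑ G` is right LCM; moreover if `pP ∩ qP = rP` then
`(p,g)S ∩ (q,h)S = (r,k)S` for any `k ∈ G`. -/
theorem rightSemidirectProduct_rightLCM {P G : Type*} [Monoid P] [Group G]
    (hP : ∀ a b c : P, a * b = a * c → b = c)
    (hlcm : ∀ p q : P,
      ({x : P | ∃ s : P, x = p * s} ∩ {x : P | ∃ s : P, x = q * s} = (∅ : Set P)) ∨
      ∃ r : P, {x : P | ∃ s : P, x = p * s} ∩ {x : P | ∃ s : P, x = q * s}
        = {x : P | ∃ s : P, x = r * s})
    (ϑ : P → (G →* G)) (hϑe : ϑ 1 = MonoidHom.id G)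
    (hϑ : ∀ p q : P, (ϑ p).comp (ϑ q) = ϑ (q * p)) :
    (∀ a b : P × G,
      ({x : P × G | ∃ s, x = sdMul ϑ a s} ∩ {x : P × G | ∃ s, x = sdMul ϑ b s}
        = (∅ : Set (P × G))) ∨
      ∃ c : P × G, {x : P × G | ∃ s, x = sdMul ϑ a s} ∩ {x : P × G | ∃ s, x = sdMul ϑ b s}
        = {x : P × G | ∃ s, x = sdMul ϑ c s}) ∧
    (∀ (p q r : P) (g h k : G),
      {x : P | ∃ s : P, x = p * s} ∩ {x : P | ∃ s : P, x = q * s}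
        = {x : P | ∃ s : P, x = r * s} →
      {x : P × G | ∃ s, x = sdMul ϑ (p, g) s} ∩ {x : P × G | ∃ s, x = sdMul ϑ (q, h) s}
        = {x : P × G | ∃ s, x = sdMul ϑ (r, k) s}) := by
  have key : ∀ (p q r : P) (g h k : G),
      {x : P | ∃ s : P, x = p * s} ∩ {x : P | ∃ s : P, x = q * s}
        = {x : P | ∃ s : P, x = r * s} →
      {x : P × G | ∃ s, x = sdMul ϑ (p, g) s} ∩ {x : P × G | ∃ s, x = sdMul ϑ (q, h) s}
        = {x : P × G | ∃ s, x = sdMul ϑ (r, k) s} := by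
    intro p q r g h k hpq
    rw [sdIdeal_eq, sdIdeal_eq, sdIdeal_eq]
    ext x
    have := Set.ext_iff.mp hpq x.1
    simpa [Set.mem_inter_iff] using this
  refine ⟨fun a b => ?_, key⟩
  rcases hlcm a.1 b.1 with hemp | ⟨r, hr⟩
  · left
    rw [sdIdeal_eq ϑ a.1 a.2, sdIdeal_eq ϑ b.1 b.2]
    ext x
    have := Set.ext_iff.mp hemp x.1
    simpa [Set.mem_inter_iff] using this
  · right
    exact ⟨(r, 1), key a.1 b.1 r a.2 b.2 1 hr⟩
end

section
/- Let ϑ be a right action of a left cancellative monoid P on a group G and S = P ⋉_ϑ G the right semidirect product. Then S is cancellative (both left and right cancellative) if and only if P is cancellative and the endomorphism ϑ_p : G → G is injective for every p ∈ P. -/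
/-- For a right action `ϑ` of a left cancellative monoid `P` on a group `G`, the right
semidirect product `S = P ⋉_ϑ G` is cancellative iff `P` is cancellative and every
`ϑ_p` is injective. -/
theorem rightSemidirectProduct_cancellative_iff {P G : Type*} [Monoid P] [Group G]
    (hP : ∀ a b c : P, a * b = a * c → b = c)
    (ϑ : P → (G →* G)) (hϑe : ϑ 1 = MonoidHom.id G)
    (hϑ : ∀ p q : P, (ϑ p).comp (ϑ q) = ϑ (q * p)) :
    ((∀ a b c : P × G, sdMul ϑ a b = sdMul ϑ a c → b = c) ∧
     (∀ a b c : P × G, sdMul ϑ a c = sdMul ϑ b c → a = b)) ↔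
    ((∀ a b c : P, a * b = a * c → b = c) ∧
     (∀ a b c : P, a * c = b * c → a = b) ∧
     (∀ p : P, Function.Injective (ϑ p))) := by
  constructor
  · rintro ⟨_, hR⟩
    refine ⟨hP, ?_, ?_⟩
    · intro a b c h
      have := hR (a, 1) (b, 1) (c, 1)
        (by simp [sdMul, h])
      exact congrArg Prod.fst this
    · intro p g h hgh
      have := hR ((1 : P), g) ((1 : P), h) (p, 1)
        (by simp [sdMul, hgh])
      exact congrArg Prod.snd this
  · rintro ⟨hl, hr, hinj⟩
    constructor
    · rintro ⟨a1, a2⟩ ⟨b1, b2⟩ ⟨c1, c2⟩ h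
      obtain ⟨h1, h2⟩ := Prod.mk.injEq .. ▸ h
      have e1 : b1 = c1 := hl a1 b1 c1 h1
      subst e1
      have : b2 = c2 := mul_left_cancel h2
      simp [this]
    · rintro ⟨a1, a2⟩ ⟨b1, b2⟩ ⟨c1, c2⟩ h
      obtain ⟨h1, h2⟩ := Prod.mk.injEq .. ▸ h
      have e1 : a1 = b1 := hr a1 b1 c1 h1
      have e2 : a2 = b2 := hinj c1 (mul_right_cancel h2)
      simp [e1, e2]
end

section
/- Let A be a C*-algebra, π : A → B(H) a nondegenerate representation on a Hilbert space H, α : A → A a *-homomorphism, and S ∈ B(H) an operator satisfying S* π(a) S = π(α(a)) for all a ∈ A. Then S is a partial isometry, π(a) S = S π(α(a)) for all a ∈ A, and the projection S S* commutes with every operator in π(A). -/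
open Filter Topology ContinuousLinearMap CStarAlgebra

/-- Let `π : A → B(H)` be a nondegenerate representation of a C*-algebra, `α : A → A` a
*-homomorphism and `S ∈ B(H)` with `S* π(a) S = π(α(a))` for all `a`. Then `S` is a
partial isometry, `π(a) S = S π(α(a))` for all `a`, and `SS*` commutes with `π(A)`. -/
theorem covariance_gives_partial_isometry {A H : Type*}
    [NonUnitalNormedRing A] [StarRing A] [CStarRing A] [NormedSpace ℂ A]
    [IsScalarTower ℂ A A] [SMulCommClass ℂ A A] [StarModule ℂ A] [CompleteSpace A]
    [NormedAddCommGroup H] [InnerProductSpace ℂ H] [CompleteSpace H]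
    (π : A →⋆ₙₐ[ℂ] (H →L[ℂ] H))
    (hnd : (Submodule.span ℂ {x : H | ∃ (a : A) (v : H), x = π a v}).topologicalClosure
      = ⊤)
    (α : A →⋆ₙₐ[ℂ] A) (S : H →L[ℂ] H)
    (hcov : ∀ a : A,
      ((ContinuousLinearMap.adjoint S).comp ((π a).comp S)) = π (α a)) :
    (S.comp ((ContinuousLinearMap.adjoint S).comp S) = S) ∧
    (∀ a : A, (π a).comp S = S.comp (π (α a))) ∧
    (∀ a : A, Commute (S.comp (ContinuousLinearMap.adjoint S)) (π a)) := by
  letI : NonUnitalCStarAlgebra A := {}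
  letI : PartialOrder A := PartialOrder.lift
    (fun a : A => (a : Unitization ℂ A)) (fun _ _ h => Unitization.inr_injective h)
  haveI : StarOrderedRing A := by
    refine StarOrderedRing.of_nonneg_iff' (fun {x y} hxy z => ?_) (fun x => ?_)
    · have hxy' : (x : Unitization ℂ A) ≤ (y : Unitization ℂ A) := hxy
      show ((z + x : A) : Unitization ℂ A) ≤ ((z + y : A) : Unitization ℂ A)
      rw [Unitization.inr_add, Unitization.inr_add]
      exact add_le_add le_rfl hxy'
    · constructor
      · intro hx
        have hx' : (0 : Unitization ℂ A) ≤ (x : Unitization ℂ A) := by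
          have h0 : ((0 : A) : Unitization ℂ A) ≤ (x : Unitization ℂ A) := hx
          rwa [Unitization.inr_zero] at h0
        have h1 : IsSelfAdjoint x :=
          (Unitization.isSelfAdjoint_inr (R := ℂ)).mp (.of_nonneg hx')
        have h2 : QuasispectrumRestricts x ContinuousMap.realToNNReal := by
          rw [QuasispectrumRestricts.nnreal_iff]
          intro t ht
          rw [Unitization.quasispectrum_eq_spectrum_inr' ℝ ℂ x] at ht
          exact spectrum_nonneg_of_nonneg hx' ht
        obtain ⟨s, hs, -, hss⟩ :=
          CFC.exists_sqrt_of_isSelfAdjoint_of_quasispectrumRestricts h1 h2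
        exact ⟨s, by rw [hs.star_eq, hss]⟩
      · rintro ⟨s, rfl⟩
        show ((0 : A) : Unitization ℂ A) ≤ ((star s * s : A) : Unitization ℂ A)
        rw [Unitization.inr_zero, Unitization.inr_mul, Unitization.inr_star]
        exact star_mul_self_nonneg _
  set l : Filter A := CStarAlgebra.approximateUnit A with hl_def
  have hl := CStarAlgebra.increasingApproximateUnit A
  haveI : l.NeBot := hl.neBot
  have hπcont : Continuous (π : A → H →L[ℂ] H) :=
    AddMonoidHomClass.continuous_of_bound π 1
      (fun a => by simpa using NonUnitalStarAlgHom.norm_apply_le π a)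
  have hαcont : Continuous (α : A → A) :=
    AddMonoidHomClass.continuous_of_bound α 1
      (fun a => by simpa using NonUnitalStarAlgHom.norm_apply_le α a)
  -- Step 1: nondegeneracy gives `π e v → v` along the approximate unit.
  have key : ∀ v : H, Tendsto (fun e : A => π e v) l (𝓝 v) := by
    set V : Submodule ℂ H :=
      { carrier := {v : H | Tendsto (fun e : A => π e v) l (𝓝 v)}
        add_mem' := fun {v w} hv hw => by
          simpa only [Set.mem_setOf_eq, map_add] using hv.add hw
        zero_mem' := by simpa only [Set.mem_setOf_eq, map_zero] using (tendsto_const_nhds : Tendsto _ l (𝓝 (0 : H)))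
        smul_mem' := fun c v hv => by
          simpa only [Set.mem_setOf_eq, map_smul] using hv.const_smul c } with hV
    have hVc : IsClosed (V : Set H) := by
      refine isClosed_of_closure_subset fun v hv => ?_
      show Tendsto (fun e : A => π e v) l (𝓝 v)
      rw [Metric.tendsto_nhds]
      intro ε hε
      obtain ⟨w, hwV, hwd⟩ := Metric.mem_closure_iff.mp hv (ε / 3) (by positivity)
      have hw' := Metric.tendsto_nhds.mp hwV (ε / 3) (by positivity)
      filter_upwards [hw', hl.eventually_norm] with e h1 h2
      have hb : dist (π e v) (π e w) ≤ ε / 3 := by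
        rw [dist_eq_norm, ← map_sub]
        calc ‖π e (v - w)‖ ≤ ‖π e‖ * ‖v - w‖ := (π e).le_opNorm _
          _ ≤ 1 * ‖v - w‖ := by
              gcongr
              exact (NonUnitalStarAlgHom.norm_apply_le π e).trans h2
          _ = dist v w := by rw [one_mul, dist_eq_norm]
          _ ≤ ε / 3 := hwd.le
      calc dist (π e v) v ≤ dist (π e v) (π e w) + dist (π e w) w + dist w v :=
            dist_triangle4 _ _ _ _
        _ < ε / 3 + ε / 3 + ε / 3 := by
            have : dist w v < ε / 3 := by rwa [dist_comm]
            have hb2 : dist (π e w) w < ε / 3 := h1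
            linarith [lt_of_le_of_lt (le_of_eq rfl) hb2]
        _ = ε := by ring
    have hgen : {x : H | ∃ (a : A) (v : H), x = π a v} ⊆ (V : Set H) := by
      rintro x ⟨a, w, rfl⟩
      show Tendsto (fun e : A => π e (π a w)) l (𝓝 (π a w))
      have hc : Continuous fun b : A => π b w := hπcont.clm_apply continuous_const
      have h1 : Tendsto (fun e : A => π (e * a) w) l (𝓝 (π a w)) :=
        (hc.tendsto a).comp (hl.tendsto_mul_right a)
      simpa only [map_mul, ContinuousLinearMap.mul_apply] using h1
    intro v
    have hsub : (Submodule.span ℂ {x : H | ∃ (a : A) (v : H), x = π a v}).topologicalClosure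
        ≤ V :=
      Submodule.topologicalClosure_minimal _ (Submodule.span_le.mpr hgen) hVc
    rw [hnd] at hsub
    exact hsub Submodule.mem_top
  -- Step 2: `π (α e) v → (S* S) v`.
  have hQlim : ∀ v : H, Tendsto (fun e : A => π (α e) v) l (𝓝 ((star S * S) v)) := by
    intro v
    have h1 : Tendsto (fun e : A => (adjoint S) (π e (S v))) l (𝓝 ((adjoint S) (S v))) :=
      ((adjoint S).continuous.tendsto _).comp (key (S v))
    have he : ∀ e : A, π (α e) v = (adjoint S) (π e (S v)) := fun e => by
      conv_lhs => rw [← hcov e]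
      rfl
    have hSS : (star S * S) v = (adjoint S) (S v) := by rw [star_eq_adjoint]; rfl
    rw [hSS]
    simpa only [he] using h1
  have hc2 : ∀ v : H, Continuous fun c : A => π (α c) v := fun v =>
    (hπcont.comp hαcont).clm_apply continuous_const
  -- Step 3: `(S* S) π(α b) = π(α b)`.
  have h3 : ∀ b : A, (star S * S) * π (α b) = π (α b) := by
    intro b
    ext v
    rw [ContinuousLinearMap.mul_apply]
    have hfun : ∀ e : A, π (α (e * b)) v = π (α e) (π (α b) v) := fun e => by
      rw [map_mul, map_mul, ContinuousLinearMap.mul_apply]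
    have t2 : Tendsto (fun e : A => π (α (e * b)) v) l (𝓝 (π (α b) v)) :=
      ((hc2 v).tendsto b).comp (hl.tendsto_mul_right b)
    have t1 : Tendsto (fun e : A => π (α (e * b)) v) l (𝓝 ((star S * S) (π (α b) v))) := by
      simpa only [hfun] using hQlim (π (α b) v)
    exact tendsto_nhds_unique t1 t2
  -- Step 4: `π(α b) (S* S) = π(α b)`.
  have h4 : ∀ b : A, π (α b) * (star S * S) = π (α b) := by
    intro b
    have h := congrArg star (h3 (star b))
    simpa only [star_mul, star_star, map_star] using h
  -- Step 5: `S* S` is a projection.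
  have h5 : (star S * S) * (star S * S) = star S * S := by
    ext v
    rw [ContinuousLinearMap.mul_apply]
    have heq : ∀ e : A, π (α e) ((star S * S) v) = π (α e) v := fun e => by
      rw [← ContinuousLinearMap.mul_apply, h4 e]
    have t1 : Tendsto (fun e : A => π (α e) v) l (𝓝 ((star S * S) ((star S * S) v))) := by
      simpa only [heq] using hQlim ((star S * S) v)
    exact tendsto_nhds_unique t1 (hQlim v)
  -- Step 6: `S (S* S) = S`, i.e. `S` is a partial isometry.
  have h6 : S * (star S * S) = S := by
    ext v
    have hz : S ((star S * S) v - v) = 0 := by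
      rw [← inner_self_eq_zero (𝕜 := ℂ)]
      have hQu : (adjoint S) (S ((star S * S) v - v)) = 0 := by
        have hQQ : (star S * S) ((star S * S) v - v) = 0 := by
          rw [map_sub, ← ContinuousLinearMap.mul_apply, h5, sub_self]
        calc (adjoint S) (S ((star S * S) v - v))
            = (star S * S) ((star S * S) v - v) := by rw [star_eq_adjoint]; rfl
          _ = 0 := hQQ
      rw [← ContinuousLinearMap.adjoint_inner_left, hQu, inner_zero_left]
    rw [map_sub, sub_eq_zero] at hz
    simpa only [ContinuousLinearMap.mul_apply] using hz
  -- the covariance relation in `*`/`star` form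
  have hcov2 : ∀ b : A, star S * (π b * S) = π (α b) := fun b => by
    rw [star_eq_adjoint]
    exact hcov b
  -- Step 7: `π a S = S π (α a)`.
  have h7 : ∀ a : A, π a * S = S * π (α a) := by
    intro a
    have hTT : star (π a * S - S * π (α a)) * (π a * S - S * π (α a)) = 0 := by
      set X := π (α a) with hX
      have hstar1 : star (π a * S) = star S * π (star a) := by
        rw [star_mul, ← map_star]
      have t1 : (star S * π (star a)) * (π a * S) = star X * X := by
        rw [mul_assoc, ← mul_assoc (π (star a)), ← map_mul, hcov2, map_mul, map_mul,
          map_star, map_star]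
      have t2 : (star S * π (star a)) * (S * X) = star X * X := by
        rw [← mul_assoc, mul_assoc (star S), hcov2, map_star, map_star]
      have t3 : (star X * star S) * (π a * S) = star X * X := by
        rw [mul_assoc, hcov2]
      have t4 : (star X * star S) * (S * X) = star X * X := by
        rw [mul_assoc, ← mul_assoc (star S), h3, hX]
      rw [star_sub, hstar1, star_mul, sub_mul, mul_sub, mul_sub, t1, t2, t3, t4,
        sub_self]
    have := (CStarRing.star_mul_self_eq_zero_iff _).mp hTT
    rwa [sub_eq_zero] at this
  have h8 : ∀ a : A, star S * π a = π (α a) * star S := by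
    intro a
    have h := congrArg star (h7 (star a))
    simpa only [star_mul, star_star, map_star] using h
  refine ⟨?_, ?_, ?_⟩
  · rw [← star_eq_adjoint]
    exact h6
  · intro a
    exact h7 a
  · intro a
    show (S.comp (adjoint S)) * π a = π a * (S.comp (adjoint S))
    have hSS : S.comp (adjoint S) = S * star S := by rw [star_eq_adjoint]; rfl
    rw [hSS]
    calc (S * star S) * π a = S * (star S * π a) := mul_assoc _ _ _
      _ = S * (π (α a) * star S) := by rw [h8]
      _ = (S * π (α a)) * star S := (mul_assoc _ _ _).symm
      _ = (π a * S) * star S := by rw [← h7]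
      _ = π a * (S * star S) := mul_assoc _ _ _
end

section
/- Let A be a C*-algebra, π : A → B(H) a nondegenerate representation, P a monoid, α : P → End(A) a unital antihomomorphism into *-endomorphisms of A (α_e = id, α_q ∘ α_p = α_{pq}), and S : P → B(H) a unital multiplicative map with S_p* π(a) S_p = π(α_p(a)) for all a ∈ A, p ∈ P. Then the projections S_p* S_p are decreasing along right divisibility: if q = tp for some t ∈ P, then S_q* S_q ≤ S_p* S_p. -/
open Unitization

lemma exists_local_approx_unit {A : Type*} [NonUnitalCStarAlgebra A] {ι : Type*}
    (s : Finset ι) (a : ι → A) {ε : ℝ} (hε : 0 < ε) :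
    ∃ u : A, ‖u‖ ≤ 1 ∧ ∀ i ∈ s, ‖u * a i - a i‖ < ε := by
  classical
  letI : PartialOrder (Unitization ℂ A) := CStarAlgebra.spectralOrder _
  letI : StarOrderedRing (Unitization ℂ A) := CStarAlgebra.spectralOrderedRing _
  set δ : ℝ := ε^2 with hδ
  have hδ0 : 0 < δ := by positivity
  set f : ℝ → ℝ := fun x => max x 0 / (max x 0 + δ) with hf
  have hf0 : f 0 = 0 := by simp [hf]
  have hfc : Continuous f := by
    apply Continuous.div (by fun_prop) (by fun_prop)
    intro x
    have : (0:ℝ) ≤ max x 0 := le_max_right x 0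
    positivity
  set b : A := ∑ i ∈ s, a i * star (a i) with hb
  have hbsa : IsSelfAdjoint b := by
    unfold IsSelfAdjoint
    rw [hb, star_sum]
    exact Finset.sum_congr rfl fun i _ => IsSelfAdjoint.mul_star_self (a i)
  have hcast : ((b : A) : Unitization ℂ A) = ∑ i ∈ s, ((a i : Unitization ℂ A) * star ((a i : A) : Unitization ℂ A)) := by
    rw [hb]
    rw [show ((∑ i ∈ s, a i * star (a i) : A) : Unitization ℂ A)
      = (inrNonUnitalStarAlgHom ℂ A) (∑ i ∈ s, a i * star (a i)) from rfl, map_sum]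
    exact Finset.sum_congr rfl fun i _ => by
      simp [inrNonUnitalStarAlgHom_apply, inr_mul, inr_star]
  have hbpos : 0 ≤ (b : Unitization ℂ A) := by
    rw [hcast]
    exact Finset.sum_nonneg fun i _ => mul_star_self_nonneg _
  have hbsa' : IsSelfAdjoint (b : Unitization ℂ A) := IsSelfAdjoint.of_nonneg hbpos
  have hspec : ∀ x ∈ spectrum ℝ (b : Unitization ℂ A), 0 ≤ x :=
    spectrum_nonneg_of_nonneg hbpos
  set u : A := cfcₙ f b with hu
  have hucast : ((u : A) : Unitization ℂ A) = cfc f ((b : A) : Unitization ℂ A) :=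
    Unitization.real_cfcₙ_eq_cfc_inr b f hf0
  have hfbd : ∀ x ∈ spectrum ℝ (b : Unitization ℂ A), ‖f x‖ ≤ 1 := by
    intro x _
    have h1 : (0:ℝ) ≤ max x 0 := le_max_right x 0
    rw [Real.norm_eq_abs, abs_of_nonneg (by positivity)]
    rw [div_le_one (by positivity)]
    linarith
  have hunorm : ‖u‖ ≤ 1 := by
    rw [← Unitization.norm_inr (𝕜 := ℂ), hucast]
    exact norm_cfc_le zero_le_one hfbd
  have husa' : IsSelfAdjoint ((u : A) : Unitization ℂ A) := by
    rw [hucast]; exact cfc_predicate _ _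
  refine ⟨u, hunorm, ?_⟩
  intro i hi
  -- work in the unitization
  set b' : Unitization ℂ A := (b : Unitization ℂ A) with hb'
  set u' : Unitization ℂ A := cfc f b' with hu'
  set c : Unitization ℂ A := u' - 1 with hc
  have hcsa : IsSelfAdjoint c := by
    rw [hc, ← hucast]
    exact husa'.sub (IsSelfAdjoint.one _)
  -- a i * star (a i) ≤ b
  have hle : ((a i : Unitization ℂ A) * star ((a i : A) : Unitization ℂ A)) ≤ b' := by
    rw [← sub_nonneg, hcast, ← Finset.sum_erase_add s _ hi, add_sub_cancel_right]
    exact Finset.sum_nonneg fun j _ => mul_star_self_nonneg _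
  -- conjugation estimate
  have hconj : c * ((a i : Unitization ℂ A) * star ((a i : A) : Unitization ℂ A)) * c
      ≤ c * b' * c := by
    have := star_left_conjugate_le_conjugate hle c
    rwa [hcsa.star_eq] at this
  have hker : ‖c * b' * c‖ ≤ δ / 4 := by
    have h1 : c = cfc (fun x => f x - 1) b' := by
      rw [cfc_sub _ _ b' hfc.continuousOn (by fun_prop), cfc_const_one ℝ b']
    have h2 : c * b' * c = cfc (fun x => (f x - 1) * (x * (f x - 1))) b' := by
      rw [cfc_mul _ _ b' (by fun_prop) (by fun_prop),
        cfc_mul _ _ b' (by fun_prop) (by fun_prop), cfc_id' ℝ b', ← h1]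
      rw [mul_assoc]
    rw [h2]
    refine norm_cfc_le (by positivity) fun x hx => ?_
    have hx0 : 0 ≤ x := hspec x hx
    have hmax : max x 0 = x := max_eq_left hx0
    have hd : 0 < x + δ := by positivity
    have hfx : f x - 1 = -δ / (x + δ) := by
      rw [hf]; simp only [hmax]; field_simp; ring
    rw [hfx, Real.norm_eq_abs]
    have : -δ / (x + δ) * (x * (-δ / (x + δ))) = δ^2 * x / (x + δ)^2 := by
      field_simp
    rw [this, abs_of_nonneg (by positivity), div_le_iff₀ (by positivity)]
    nlinarith [sq_nonneg (x - δ)]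
  -- put it together
  have hsq : ‖u * a i - a i‖ ^ 2 ≤ δ / 4 := by
    have hxcast : ((u * a i - a i : A) : Unitization ℂ A) = c * (a i : Unitization ℂ A) := by
      rw [inr_sub ℂ, inr_mul ℂ, hucast, hc, hu', hb']
      rw [sub_mul, one_mul]
    rw [← Unitization.norm_inr (𝕜 := ℂ), hxcast]
    have hnorm2 : ‖c * (a i : Unitization ℂ A)‖ ^ 2
        = ‖c * ((a i : Unitization ℂ A) * star ((a i : A) : Unitization ℂ A)) * c‖ := by
      rw [sq, ← CStarRing.norm_self_mul_star]
      congr 1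
      rw [star_mul, hcsa.star_eq]
      simp [mul_assoc]
    rw [hnorm2]
    calc ‖c * ((a i : Unitization ℂ A) * star ((a i : A) : Unitization ℂ A)) * c‖
        ≤ ‖c * b' * c‖ := by
          refine CStarAlgebra.norm_le_norm_of_nonneg_of_le ?_ hconj
          have := star_left_conjugate_nonneg (mul_star_self_nonneg ((a i : Unitization ℂ A))) c
          rwa [hcsa.star_eq] at this
      _ ≤ δ / 4 := hker
  have : ‖u * a i - a i‖ ^ 2 < ε ^ 2 := lt_of_le_of_lt hsq (by rw [hδ]; nlinarith)
  nlinarith [norm_nonneg (u * a i - a i)]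


/-- Let `π : A → B(H)` be a nondegenerate representation of a C*-algebra, `α` a unital
antihomomorphism of a monoid `P` into *-endomorphisms of `A`, and `S : P → B(H)` a
unital multiplicative map with `S_p* π(a) S_p = π(α_p(a))`. Then the projections
`S_p* S_p` are decreasing along right divisibility: `q = tp` implies
`S_q* S_q ≤ S_p* S_p`. -/
theorem final_projections_decreasing {A H P : Type*} [Monoid P]
    [NonUnitalNormedRing A] [StarRing A] [CStarRing A] [NormedSpace ℂ A]
    [IsScalarTower ℂ A A] [SMulCommClass ℂ A A] [StarModule ℂ A] [CompleteSpace A]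
    [NormedAddCommGroup H] [InnerProductSpace ℂ H] [CompleteSpace H]
    (π : A →⋆ₙₐ[ℂ] (H →L[ℂ] H))
    (hnd : (Submodule.span ℂ {x : H | ∃ (a : A) (v : H), x = π a v}).topologicalClosure
      = ⊤)
    (α : P → (A →⋆ₙₐ[ℂ] A))
    (hα1 : ∀ a : A, α 1 a = a)
    (hαanti : ∀ (p q : P) (a : A), α q (α p a) = α (p * q) a)
    (S : P → (H →L[ℂ] H)) (hS1 : S 1 = 1)
    (hSmul : ∀ p q : P, S (p * q) = (S p).comp (S q))
    (hcov : ∀ (p : P) (a : A),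
      (ContinuousLinearMap.adjoint (S p)).comp ((π a).comp (S p)) = π (α p a)) :
    ∀ p q t : P, q = t * p →
      (((ContinuousLinearMap.adjoint (S p)).comp (S p)) -
       ((ContinuousLinearMap.adjoint (S q)).comp (S q))).IsPositive := by
  letI : NonUnitalCStarAlgebra A := {}
  letI : NonUnitalCStarAlgebra (H →L[ℂ] H) := {}
  -- contractivity of the representation and the endomorphisms
  have hπle : ∀ x : A, ‖π x‖ ≤ ‖x‖ := fun x => NonUnitalStarAlgHom.norm_apply_le π x
  have hαle : ∀ (t : P) (x : A), ‖α t x‖ ≤ ‖x‖ := fun t x =>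
    NonUnitalStarAlgHom.norm_apply_le (α t) x
  -- approximate units act approximately as the identity on H
  have happrox : ∀ (y : H), ∀ ε > (0:ℝ), ∃ u : A, ‖u‖ ≤ 1 ∧ ‖π u y - y‖ < ε := by
    intro y ε hε
    have hy : y ∈ closure ((Submodule.span ℂ {x : H | ∃ (a : A) (v : H), x = π a v} : Submodule ℂ H) : Set H) := by
      rw [← Submodule.topologicalClosure_coe, hnd]
      trivial
    rw [Metric.mem_closure_iff] at hy
    obtain ⟨x, hxmem, hxy⟩ := hy (ε/3) (by positivity)
    rw [SetLike.mem_coe, Submodule.mem_span_set'] at hxmem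
    obtain ⟨n, c, g, hg⟩ := hxmem
    choose aa vv hav using fun i : Fin n => (g i).2
    set M : ℝ := (∑ i, ‖c i‖ * ‖vv i‖) + 1 with hM
    have hM0 : 0 < M := by positivity
    obtain ⟨u, hu1, hu2⟩ := exists_local_approx_unit (A := A) Finset.univ aa
      (ε := ε/(3*M)) (by positivity)
    refine ⟨u, hu1, ?_⟩
    have hx : x = ∑ i, c i • (π (aa i)) (vv i) := by
      rw [← hg]
      exact Finset.sum_congr rfl fun i _ => by rw [← hav i]
    have hπux : π u x - x = ∑ i, c i • (π (u * aa i - aa i)) (vv i) := by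
      rw [hx]
      rw [map_sum]
      rw [← Finset.sum_sub_distrib]
      refine Finset.sum_congr rfl fun i _ => ?_
      rw [map_smul, ← smul_sub]
      congr 1
      rw [map_sub, map_mul]
      simp [ContinuousLinearMap.sub_apply, ContinuousLinearMap.mul_apply]
    have hterm2 : ‖π u x - x‖ ≤ ε/3 := by
      rw [hπux]
      calc ‖∑ i, c i • (π (u * aa i - aa i)) (vv i)‖
          ≤ ∑ i, ‖c i • (π (u * aa i - aa i)) (vv i)‖ := norm_sum_le _ _
        _ ≤ ∑ i, ‖c i‖ * ((ε/(3*M)) * ‖vv i‖) := by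
            refine Finset.sum_le_sum fun i _ => ?_
            rw [norm_smul]
            refine mul_le_mul_of_nonneg_left ?_ (norm_nonneg _)
            calc ‖(π (u * aa i - aa i)) (vv i)‖
                ≤ ‖π (u * aa i - aa i)‖ * ‖vv i‖ := ContinuousLinearMap.le_opNorm _ _
              _ ≤ (ε/(3*M)) * ‖vv i‖ := by
                  refine mul_le_mul_of_nonneg_right ?_ (norm_nonneg _)
                  exact le_trans (hπle _) (le_of_lt (hu2 i (Finset.mem_univ i)))
        _ = (ε/(3*M)) * ∑ i, ‖c i‖ * ‖vv i‖ := by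
            rw [Finset.mul_sum]
            exact Finset.sum_congr rfl fun i _ => by ring
        _ ≤ (ε/(3*M)) * M := by
            refine mul_le_mul_of_nonneg_left ?_ (by positivity)
            rw [hM]; linarith
        _ = ε/3 := by field_simp
    have hterm1 : ‖π u (y - x)‖ ≤ ε/3 := by
      calc ‖π u (y - x)‖ ≤ ‖π u‖ * ‖y - x‖ := ContinuousLinearMap.le_opNorm _ _
        _ ≤ 1 * (ε/3) := by
            refine mul_le_mul (le_trans (hπle u) hu1) ?_ (norm_nonneg _) zero_le_one
            rw [← dist_eq_norm]
            exact le_of_lt hxy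
        _ = ε/3 := one_mul _
    calc ‖π u y - y‖ = ‖π u (y - x) + (π u x - x) + (x - y)‖ := by
          congr 1
          rw [map_sub]
          abel
      _ ≤ ‖π u (y - x) + (π u x - x)‖ + ‖x - y‖ := norm_add_le _ _
      _ ≤ ‖π u (y - x)‖ + ‖π u x - x‖ + ‖x - y‖ := by
          gcongr
          exact norm_add_le _ _
      _ < ε := by
          have h3 : ‖x - y‖ < ε/3 := by rw [← dist_eq_norm, dist_comm]; exact hxy
          linarith
  -- the key contraction property of each S t
  have hadj : ∀ (t : P) (z : H),
      ‖(ContinuousLinearMap.adjoint (S t)) ((S t) z)‖ ≤ ‖z‖ := by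
    intro t z
    refine le_of_forall_sub_le fun ε hε => ?_
    rw [sub_le_iff_le_add]
    set C : ℝ := ‖ContinuousLinearMap.adjoint (S t)‖ + 1 with hC
    have hC0 : 0 < C := by positivity
    obtain ⟨u, hu1, hu2⟩ := happrox ((S t) z) (ε/C) (by positivity)
    have heq : (π ((α t) u)) z
        = (ContinuousLinearMap.adjoint (S t)) ((π u) ((S t) z)) := by
      rw [← hcov t u]
      rfl
    have h1 : ‖(ContinuousLinearMap.adjoint (S t)) ((S t) z) - (π ((α t) u)) z‖ ≤ ε := by
      rw [heq, ← map_sub]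
      calc ‖(ContinuousLinearMap.adjoint (S t)) ((S t) z - (π u) ((S t) z))‖
          ≤ ‖ContinuousLinearMap.adjoint (S t)‖ * ‖(S t) z - (π u) ((S t) z)‖ :=
            ContinuousLinearMap.le_opNorm _ _
        _ ≤ C * (ε/C) := by
            refine mul_le_mul ?_ ?_ (norm_nonneg _) (le_of_lt hC0)
            · rw [hC]; linarith
            · rw [← norm_neg, neg_sub]
              exact le_of_lt hu2
        _ = ε := by field_simp
    have h2 : ‖(π ((α t) u)) z‖ ≤ ‖z‖ := by
      calc ‖(π ((α t) u)) z‖ ≤ ‖π ((α t) u)‖ * ‖z‖ := ContinuousLinearMap.le_opNorm _ _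
        _ ≤ 1 * ‖z‖ := by
            refine mul_le_mul_of_nonneg_right ?_ (norm_nonneg _)
            exact le_trans (hπle _) (le_trans (hαle t u) hu1)
        _ = ‖z‖ := one_mul _
    calc ‖(ContinuousLinearMap.adjoint (S t)) ((S t) z)‖
        ≤ ‖(ContinuousLinearMap.adjoint (S t)) ((S t) z) - (π ((α t) u)) z‖
            + ‖(π ((α t) u)) z‖ := by
              have := norm_add_le ((ContinuousLinearMap.adjoint (S t)) ((S t) z)
                - (π ((α t) u)) z) ((π ((α t) u)) z)
              simpa using this
      _ ≤ ε + ‖z‖ := add_le_add h1 h2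
      _ = ‖z‖ + ε := by ring
  have hSnorm : ∀ (t : P) (z : H), ‖(S t) z‖ ≤ ‖z‖ := by
    intro t z
    have h1 : ‖(S t) z‖ ^ 2
        = RCLike.re (inner ℂ ((ContinuousLinearMap.adjoint (S t)) ((S t) z)) z : ℂ) := by
      rw [ContinuousLinearMap.adjoint_inner_left]
      exact (inner_self_eq_norm_sq _).symm
    have h2 : ‖(S t) z‖ ^ 2 ≤ ‖z‖ * ‖z‖ := by
      rw [h1]
      calc RCLike.re (inner ℂ ((ContinuousLinearMap.adjoint (S t)) ((S t) z)) z : ℂ)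
          ≤ ‖(inner ℂ ((ContinuousLinearMap.adjoint (S t)) ((S t) z)) z : ℂ)‖ :=
            RCLike.re_le_norm _
        _ ≤ ‖(ContinuousLinearMap.adjoint (S t)) ((S t) z)‖ * ‖z‖ := norm_inner_le_norm _ _
        _ ≤ ‖z‖ * ‖z‖ := mul_le_mul_of_nonneg_right (hadj t z) (norm_nonneg _)
    nlinarith [norm_nonneg ((S t) z), norm_nonneg z]
  -- conclusion
  intro p q t hq
  subst hq
  constructor
  · apply ContinuousLinearMap.isSelfAdjoint_iff_isSymmetric.mp
    apply IsSelfAdjoint.sub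
    all_goals
      rw [IsSelfAdjoint, ContinuousLinearMap.star_eq_adjoint, ContinuousLinearMap.adjoint_comp,
        ContinuousLinearMap.adjoint_adjoint]
  · intro x
    rw [ContinuousLinearMap.reApplyInnerSelf_apply]
    rw [ContinuousLinearMap.sub_apply, inner_sub_left, map_sub, sub_nonneg]
    have e1 : ∀ r : P, RCLike.re
        (inner ℂ (((ContinuousLinearMap.adjoint (S r)).comp (S r)) x) x : ℂ) = ‖(S r) x‖ ^ 2 := by
      intro r
      rw [ContinuousLinearMap.comp_apply, ContinuousLinearMap.adjoint_inner_left]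
      exact inner_self_eq_norm_sq _
    rw [e1, e1]
    have hstp : (S (t * p)) x = (S t) ((S p) x) := by rw [hSmul]; rfl
    rw [hstp]
    have := hSnorm t ((S p) x)
    nlinarith [norm_nonneg ((S t) ((S p) x)), norm_nonneg ((S p) x)]
end
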